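/- Let G be a connected graph of order n ≥ 5 that contains a Hamiltonian path and satisfies |E(G)| ≥ 2(n − 2). Then the metric dimension of the line graph of G is at most the zero forcing number of the line graph of G: dim(L(G)) ≤ Z(L(G)). -/

import Mathlib

/-!
Zero forcing in `L(G)`: order the forces chronologically. When an edge `u` forces the edge `x`,
every other edge at a common endpoint `z` of `u` and `x` is already black, so `x` is the last edge
at `z` to turn black; hence `x ↦ z` is injective on the forced edges. Its image misses the far
endpoint of the first forcing edge, all of whose edges are initially black, and the far endpoint
of the last forced edge. So at most `n - 2` edges are forced, and
`Z(L(G)) ≥ |E(G)| - (n - 2) ≥ n - 2`.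

Metric dimension: edges of `L(G)` at distance one share an endpoint, so a set of edges that
separates any two other edges by adjacency is resolving. Along a Hamiltonian path
`v₀ v₁ ⋯ v_{n-1}`, the first `n - 2` path edges separate any two other edges by the indices of
their endpoints, except when `n = 5` and both `v₀v₂` and `v₁v₃` are edges. Then all four path
edges work, which is few enough once `|E(G)| ≥ 7`, and when these six are the only edges,
`v₀v₁`, `v₁v₂`, `v₃v₄` do.
-/

open SimpleGraph

variable {V : Type*}

/-- `W` is a resolving set of `G`: every pair of distinct vertices is resolved
by some vertex of `W` via graph distance. -/
def IsResolvingSet (G : SimpleGraph V) (W : Set V) : Prop :=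
  ∀ u v : V, u ≠ v → ∃ w ∈ W, G.dist u w ≠ G.dist v w

/-- The metric dimension of `G`: minimum cardinality of a resolving set. -/
noncomputable def metricDim (G : SimpleGraph V) : ℕ :=
  sInf {k | ∃ W : Set V, W.ncard = k ∧ IsResolvingSet G W}

/-- One global application of the zero-forcing color-change rule:
a black vertex `u` forces its unique white neighbor to become black. -/
def zfStep (G : SimpleGraph V) (S : Set V) : Set V :=
  S ∪ {v | ∃ u ∈ S, G.Adj u v ∧ ∀ w, G.Adj u w → w ∉ S → w = v}

/-- `S` is a zero forcing set of `G` if iterating the color-change rule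
starting from `S` eventually turns all vertices black. -/
def IsZeroForcingSet (G : SimpleGraph V) (S : Set V) : Prop :=
  ∃ m : ℕ, (zfStep G)^[m] S = Set.univ

/-- The zero forcing number of `G`: minimum cardinality of a zero forcing set. -/
noncomputable def zeroForcingNum (G : SimpleGraph V) : ℕ :=
  sInf {k | ∃ S : Set V, S.ncard = k ∧ IsZeroForcingSet G S}

/-- The wheel graph `W_{1,n} = C_n + K_1`: hub `none` joined to the cycle `C_n`
on vertices `some i`, `i : Fin n`. -/
def wheelGraph (n : ℕ) : SimpleGraph (Option (Fin n)) :=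
  SimpleGraph.fromRel (fun u v =>
    match u, v with
    | none, some _ => True
    | some i, some j => ((i : ℕ) : ZMod n) + 1 = ((j : ℕ) : ZMod n)
    | _, _ => False)

/-- The bouquet of `n` circles of lengths `k 0 + 1, …, k (n-1) + 1`: the cut
vertex is `none`; the `i`-th circle consists of `none` together with the vertices
`some ⟨i, j⟩`, `j : Fin (k i)`, in cyclic order. -/
def bouquet (n : ℕ) (k : Fin n → ℕ) : SimpleGraph (Option (Σ i : Fin n, Fin (k i))) :=
  SimpleGraph.fromRel (fun u v =>
    match u, v with
    | none, some a => (a.2 : ℕ) = 0 ∨ (a.2 : ℕ) = k a.1 - 1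
    | some a, some b => a.1 = b.1 ∧ ((b.2 : ℕ) = (a.2 : ℕ) + 1)
    | _, _ => False)

/-- The path cover number of `G`: the minimum number of vertex-disjoint induced
paths covering all the vertices of `G`. -/
noncomputable def pathCoverNum (G : SimpleGraph V) : ℕ :=
  sInf {m | ∃ f : V → Fin m, ∀ i : Fin m,
    ∃ k, 1 ≤ k ∧ Nonempty ((G.induce (f ⁻¹' {i})) ≃g SimpleGraph.pathGraph k)}

/-- `G` contains a Hamiltonian path. -/
def HasHamiltonianPath [DecidableEq V] (G : SimpleGraph V) : Prop :=
  ∃ (u v : V) (p : G.Walk u v), p.IsHamiltonian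

section ZeroForcing

variable {α : Type*}

lemma subset_zfStep (H : SimpleGraph α) (S : Set α) : S ⊆ zfStep H S :=
  Set.subset_union_left

lemma monotone_iterate_zfStep (H : SimpleGraph α) (S : Set α) :
    Monotone fun t => (zfStep H)^[t] S :=
  monotone_nat_of_le_succ fun t => by
    simpa only [Function.iterate_succ_apply'] using subset_zfStep H _

namespace IsZeroForcingSet

variable {H : SimpleGraph α} {S : Set α}

lemma exists_mem_iterate (hS : IsZeroForcingSet H S) (x : α) : ∃ t, x ∈ (zfStep H)^[t] S :=
  let ⟨m, hm⟩ := hS; ⟨m, hm ▸ Set.mem_univ x⟩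

open Classical in
noncomputable def forcingTime (hS : IsZeroForcingSet H S) (x : α) : ℕ :=
  Nat.find (hS.exists_mem_iterate x)

variable (hS : IsZeroForcingSet H S) {x : α}

lemma mem_iterate_iff {t : ℕ} : x ∈ (zfStep H)^[t] S ↔ hS.forcingTime x ≤ t := by
  classical
  exact ⟨fun h => Nat.find_min' _ h,
    fun h => monotone_iterate_zfStep H S h (Nat.find_spec (hS.exists_mem_iterate x))⟩

lemma forcingTime_eq_zero_iff : hS.forcingTime x = 0 ↔ x ∈ S := by
  rw [← Nat.le_zero, ← hS.mem_iterate_iff]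
  rfl

lemma exists_forcer (hx : x ∉ S) :
    ∃ u, hS.forcingTime u < hS.forcingTime x ∧ H.Adj u x ∧
      ∀ w, H.Adj u w → hS.forcingTime x ≤ hS.forcingTime w → w = x := by
  obtain ⟨t, ht⟩ := Nat.exists_eq_succ_of_ne_zero (mt hS.forcingTime_eq_zero_iff.1 hx)
  have hxt : x ∈ zfStep H ((zfStep H)^[t] S) := by
    rw [← Function.iterate_succ_apply' (zfStep H), hS.mem_iterate_iff, ht]
  rcases hxt with hold | ⟨u, hu, hux, huniq⟩
  · rw [hS.mem_iterate_iff] at hold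
    omega
  · rw [hS.mem_iterate_iff] at hu
    refine ⟨u, by omega, hux, fun w huw hw => huniq w huw ?_⟩
    rw [hS.mem_iterate_iff]
    omega

end IsZeroForcingSet

end ZeroForcing

namespace IsZeroForcingSet

variable {G : SimpleGraph V} {S : Set G.edgeSet}

lemma exists_lineGraph_forcer (hS : IsZeroForcingSet G.lineGraph S) {x : G.edgeSet} (hx : x ∉ S) :
    ∃ u : G.edgeSet, hS.forcingTime u < hS.forcingTime x ∧
      (∃ z ∈ (u : Sym2 V), z ∈ (x : Sym2 V)) ∧
      ∀ z ∈ (u : Sym2 V), ∀ y : G.edgeSet, z ∈ (y : Sym2 V) →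
        hS.forcingTime x ≤ hS.forcingTime y → y = x := by
  obtain ⟨u, hux, hadj, huniq⟩ := hS.exists_forcer hx
  refine ⟨u, hux, (lineGraph_adj_iff_exists.1 hadj).2, fun z hzu y hzy hxy => huniq y ?_ hxy⟩
  refine lineGraph_adj_iff_exists.2 ⟨?_, z, hzu, hzy⟩
  rintro rfl
  omega

lemma exists_vertex_forced_last (hS : IsZeroForcingSet G.lineGraph S) {x : G.edgeSet}
    (hx : x ∉ S) :
    ∃ z ∈ (x : Sym2 V), ∀ y : G.edgeSet, z ∈ (y : Sym2 V) →
      hS.forcingTime x ≤ hS.forcingTime y → y = x := by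
  obtain ⟨u, -, ⟨z, hzu, hzx⟩, hlast⟩ := hS.exists_lineGraph_forcer hx
  exact ⟨z, hzx, hlast z hzu⟩

lemma exists_vertex_forall_incident_mem [Finite V] (hS : IsZeroForcingSet G.lineGraph S)
    (hSc : Sᶜ.Nonempty) :
    ∃ a : V, ∀ y : G.edgeSet, a ∈ (y : Sym2 V) → y ∈ S := by
  obtain ⟨x, hx, hmin⟩ := Set.exists_min_image Sᶜ hS.forcingTime (Set.toFinite _) hSc
  obtain ⟨u, hux, ⟨z, hzu, hzx⟩, hlast⟩ := hS.exists_lineGraph_forcer hx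
  obtain ⟨a, hu⟩ := Sym2.mem_iff_exists.1 hzu
  have hza : z ≠ a := fun h => G.not_isDiag_of_mem_edgeSet u.2 (by rw [hu, h]; rfl)
  refine ⟨a, fun y hay => by_contra fun hy => ?_⟩
  have hyx : y = x := hlast a (hu ▸ Sym2.mem_mk_right z a) y hay (hmin y hy)
  have hux' : (u : Sym2 V) = x := by
    rw [hu, ← (Sym2.mem_and_mem_iff hza).1 ⟨hzx, hyx ▸ hay⟩]
  rw [Subtype.ext hux'] at hux
  exact lt_irrefl _ hux

theorem ncard_edgeSet_le [Fintype V] (hS : IsZeroForcingSet G.lineGraph S) :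
    G.edgeSet.ncard ≤ S.ncard + (Fintype.card V - 2) := by
  suffices Sᶜ.ncard ≤ Fintype.card V - 2 by
    rw [← Nat.card_coe_set_eq, ← S.ncard_add_ncard_compl]
    omega
  rcases Sᶜ.eq_empty_or_nonempty with hSc | hSc
  · simp [hSc]
  obtain ⟨a, ha⟩ := hS.exists_vertex_forall_incident_mem hSc
  have : Nonempty V := ⟨a⟩
  choose! J hJx hJlast using fun x (hx : x ∉ S) => hS.exists_vertex_forced_last hx
  obtain ⟨x, hx, hmax⟩ := Set.exists_max_image Sᶜ hS.forcingTime (Set.toFinite _) hSc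
  obtain ⟨d, hxd⟩ := Sym2.mem_iff_exists.1 (hJx x hx)
  have hdx : d ∈ (x : Sym2 V) := hxd ▸ Sym2.mem_mk_right _ _
  have hJd : J x ≠ d := fun h => G.not_isDiag_of_mem_edgeSet x.2 (by rw [hxd, h]; rfl)
  have hJ_inj : Set.InjOn J Sᶜ := by
    intro y hy y' hy' h
    rcases le_total (hS.forcingTime y) (hS.forcingTime y') with hle | hle
    · exact (hJlast y hy y' (h ▸ hJx y' hy') hle).symm
    · exact hJlast y' hy' y (h ▸ hJx y hy) hle
  have hJ_maps : ∀ y ∈ Sᶜ, J y ∈ ({a, d}ᶜ : Set V) := by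
    intro y hy
    simp only [Set.mem_compl_iff, Set.mem_insert_iff, Set.mem_singleton_iff, not_or]
    refine ⟨fun h => hy (ha y (h ▸ hJx y hy)), fun h => hJd ?_⟩
    rw [hJlast y hy x (h ▸ hdx) (hmax y hy)]
    exact h
  have had : a ≠ d := fun h => hx (ha x (h ▸ hdx))
  calc Sᶜ.ncard ≤ ({a, d}ᶜ : Set V).ncard := Set.ncard_le_ncard_of_injOn J hJ_maps hJ_inj
    _ = Fintype.card V - 2 := by
      rw [Set.ncard_compl, Set.ncard_pair had, Nat.card_eq_fintype_card]

end IsZeroForcingSet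

lemma isResolvingSet_of_forall_exists_not_adj_iff {α : Type*} {H : SimpleGraph α} {W : Set α}
    (hH : H.Preconnected)
    (h : ∀ u v, u ≠ v → u ∉ W → v ∉ W → ∃ w ∈ W, ¬(H.Adj u w ↔ H.Adj v w)) :
    IsResolvingSet H W := by
  intro u v huv
  by_cases hu : u ∈ W
  · exact ⟨u, hu, by rw [dist_self]; exact ((hH v u).pos_dist_of_ne huv.symm).ne⟩
  by_cases hv : v ∈ W
  · exact ⟨v, hv, by rw [dist_self]; exact ((hH u v).pos_dist_of_ne huv).ne'⟩
  obtain ⟨w, hw, hadj⟩ := h u v huv hu hv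
  refine ⟨w, hw, fun hd => hadj ?_⟩
  rw [← dist_eq_one_iff_adj, ← dist_eq_one_iff_adj, hd]

lemma lineGraph_reachable_of_mem_of_mem {G : SimpleGraph V} {e f : G.edgeSet} {z : V}
    (he : z ∈ (e : Sym2 V)) (hf : z ∈ (f : Sym2 V)) : G.lineGraph.Reachable e f := by
  by_cases hef : e = f
  · exact hef ▸ Reachable.refl e
  · exact (lineGraph_adj_iff_exists.2 ⟨hef, z, he, hf⟩).reachable

lemma SimpleGraph.Preconnected.lineGraph {G : SimpleGraph V} (hG : G.Preconnected) :
    G.lineGraph.Preconnected := by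
  have hwalk : ∀ {x y : V} (_ : G.Walk x y) (e f : G.edgeSet), x ∈ (e : Sym2 V) →
      y ∈ (f : Sym2 V) → G.lineGraph.Reachable e f := by
    intro x y p
    induction p with
    | nil => exact fun e f he hf => lineGraph_reachable_of_mem_of_mem he hf
    | @cons x x' _ hxx' _ ih =>
      intro e f he hf
      let g : G.edgeSet := ⟨s(x, x'), hxx'⟩
      exact (lineGraph_reachable_of_mem_of_mem (f := g) he (Sym2.mem_mk_left x x')).trans
        (ih g f (Sym2.mem_mk_right x x') hf)
  rintro ⟨e, he⟩ ⟨f, hf⟩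
  induction e using Sym2.ind with
  | h x _ =>
    induction f using Sym2.ind with
    | h y _ => exact hwalk (hG x y).some _ _ (Sym2.mem_mk_left _ _) (Sym2.mem_mk_left _ _)

lemma HasHamiltonianPath.exists_bijOn [Fintype V] [DecidableEq V] {G : SimpleGraph V}
    (h : HasHamiltonianPath G) :
    ∃ v : ℕ → V, Set.BijOn v (Set.Iio (Fintype.card V)) Set.univ ∧
      ∀ i, i + 1 < Fintype.card V → G.Adj (v i) (v (i + 1)) := by
  obtain ⟨x, _, p, hp⟩ := h
  have hlen := hp.length_eq
  have hpos : 0 < Fintype.card V := Fintype.card_pos_iff.2 ⟨x⟩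
  refine ⟨p.getVert, ⟨fun _ _ => trivial, ?_, fun y _ => ?_⟩,
    fun i hi => p.adj_getVert_succ ?_⟩
  · exact hp.isPath.getVert_injOn.mono fun i (hi : i < _) => show i ≤ p.length by omega
  · obtain ⟨i, hi, hle⟩ := Walk.mem_support_iff_exists_getVert.1 (hp.mem_support y)
    exact ⟨i, show i < _ by omega, hi⟩
  · omega

/-- Along a path `v`, the step `v i v (i+1)` and the edge `v a v b` share an endpoint. -/
def StepMeets (i a b : ℕ) : Prop := a = i ∨ a = i + 1 ∨ b = i ∨ b = i + 1

instance (i a b : ℕ) : Decidable (StepMeets i a b) :=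
  inferInstanceAs (Decidable (_ ∨ _))

lemma exists_stepMeets_not_iff_of_lt {n m a b c d : ℕ} (hnm : n ≤ m + 2) (hm : 3 ≤ m)
    (hb : b < n) (hd : d < n) (hab : a < b) (hcd : c < d)
    (he : ¬(b = a + 1 ∧ a < m)) (hf : ¬(d = c + 1 ∧ c < m))
    (hexc : m = 3 → ¬(a = 0 ∧ b = 2 ∧ c = 1 ∧ d = 3))
    (hlex : a < c ∨ a = c ∧ b < d) :
    ∃ i < m, ¬(StepMeets i a b ↔ StepMeets i c d) := by
  unfold StepMeets
  rcases hlex with hac | ⟨rfl, hbd⟩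
  · by_cases hc : 2 ≤ c
    · exact ⟨a - 1, by omega, by omega⟩
    by_cases hb2 : b = 2
    · by_cases hd3 : d = 3
      · exact ⟨3, by omega, by omega⟩
      · exact ⟨2, by omega, by omega⟩
    · exact ⟨1, by omega, by omega⟩
  · by_cases hd : d = b + 1
    · exact ⟨b - 1, by omega, by omega⟩
    · exact ⟨b, by omega, by omega⟩

lemma exists_stepMeets_not_iff {n m a b c d : ℕ} (hnm : n ≤ m + 2) (hm : 3 ≤ m)
    (hb : b < n) (hd : d < n) (hab : a < b) (hcd : c < d) (hne : ¬(a = c ∧ b = d))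
    (he : ¬(b = a + 1 ∧ a < m)) (hf : ¬(d = c + 1 ∧ c < m))
    (hexc : m = 3 →
      ¬(a = 0 ∧ b = 2 ∧ c = 1 ∧ d = 3) ∧ ¬(c = 0 ∧ d = 2 ∧ a = 1 ∧ b = 3)) :
    ∃ i < m, ¬(StepMeets i a b ↔ StepMeets i c d) := by
  by_cases hlex : a < c ∨ a = c ∧ b < d
  · exact exists_stepMeets_not_iff_of_lt hnm hm hb hd hab hcd he hf (fun h => (hexc h).1) hlex
  · obtain ⟨i, hi, h⟩ := exists_stepMeets_not_iff_of_lt hnm hm hd hb hcd hab hf he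
      (fun h => (hexc h).2) (by omega)
    exact ⟨i, hi, fun h' => h h'.symm⟩

def exceptionalIndexEdges : Finset (ℕ × ℕ) := {(0, 1), (1, 2), (2, 3), (3, 4), (0, 2), (1, 3)}

lemma exists_stepMeets_not_iff_of_mem_exceptionalIndexEdges :
    ∀ p ∈ exceptionalIndexEdges, ∀ q ∈ exceptionalIndexEdges, p ≠ q →
      (∀ i ∈ ({0, 1, 3} : Finset ℕ), p ≠ (i, i + 1)) →
      (∀ i ∈ ({0, 1, 3} : Finset ℕ), q ≠ (i, i + 1)) →
      ∃ i ∈ ({0, 1, 3} : Finset ℕ), ¬(StepMeets i p.1 p.2 ↔ StepMeets i q.1 q.2) := by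
  decide

section HamiltonianPath

variable {G : SimpleGraph V} {n : ℕ} {v : ℕ → V}

def pathEdges (G : SimpleGraph V) (v : ℕ → V) (I : Finset ℕ) : Set G.edgeSet :=
  {e | ∃ i ∈ I, (e : Sym2 V) = s(v i, v (i + 1))}

lemma ncard_pathEdges_le (I : Finset ℕ) : (pathEdges G v I).ncard ≤ I.card := by
  calc (pathEdges G v I).ncard ≤ ((fun i => s(v i, v (i + 1))) '' (I : Set ℕ)).ncard :=
        Set.ncard_le_ncard_of_injOn Subtype.val (fun e ⟨i, hi, he⟩ => ⟨i, hi, he.symm⟩)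
          Subtype.val_injective.injOn (Set.toFinite _)
    _ ≤ I.card := (Set.ncard_image_le (Set.toFinite _)).trans (Set.ncard_coe_finset I).le

lemma exists_lt_lt_eq_sym2_mk (hv : Set.SurjOn v (Set.Iio n) Set.univ) (e : G.edgeSet) :
    ∃ a b, a < b ∧ b < n ∧ (e : Sym2 V) = s(v a, v b) := by
  obtain ⟨e, he⟩ := e
  induction e using Sym2.ind with
  | h x y =>
    obtain ⟨a, ha, rfl⟩ := hv (Set.mem_univ x)
    obtain ⟨b, hb, rfl⟩ := hv (Set.mem_univ y)
    have hab : a ≠ b := by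
      rintro rfl
      exact (G.mem_edgeSet.1 he).ne rfl
    rcases hab.lt_or_gt with h | h
    · exact ⟨a, b, h, hb, rfl⟩
    · exact ⟨b, a, h, ha, Sym2.eq_swap⟩

lemma exists_mem_sym2_mk_iff_stepMeets (hv : Set.InjOn v (Set.Iio n)) {a b i : ℕ}
    (ha : a < n) (hb : b < n) (hi : i + 1 < n) :
    (∃ z, z ∈ s(v a, v b) ∧ z ∈ s(v i, v (i + 1))) ↔ StepMeets i a b := by
  have hi' : i < n := by omega
  simp only [Sym2.mem_iff, StepMeets]
  constructor
  · rintro ⟨z, rfl | rfl, h | h⟩ <;> simp_all [hv.eq_iff]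
  · rintro (rfl | rfl | rfl | rfl) <;> simp

lemma card_le_ncard_edgeSet [Finite V] (hv : Set.InjOn v (Set.Iio n)) (Q : Finset (ℕ × ℕ))
    (hQ : ∀ p ∈ Q, p.1 < p.2 ∧ p.2 < n ∧ G.Adj (v p.1) (v p.2)) :
    Q.card ≤ G.edgeSet.ncard := by
  rw [← Set.ncard_coe_finset]
  refine Set.ncard_le_ncard_of_injOn (fun p => s(v p.1, v p.2)) (fun p hp => (hQ p hp).2.2) ?_
    (Set.toFinite _)
  rintro ⟨a, b⟩ hab ⟨c, d⟩ hcd h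
  obtain ⟨hab, hb, -⟩ : a < b ∧ b < n ∧ _ := hQ _ hab
  obtain ⟨hcd, hd, -⟩ : c < d ∧ d < n ∧ _ := hQ _ hcd
  have hv' : ∀ {x y}, x < n → y < n → v x = v y → x = y := fun hx hy h => hv hx hy h
  simp only at h
  rcases Sym2.eq_iff.1 h with ⟨h1, h2⟩ | ⟨h1, h2⟩
  · rw [hv' (by omega) (by omega) h1, hv' hb hd h2]
  · have := hv' (by omega) hd h1
    have := hv' hb (by omega) h2
    omega

lemma mem_of_ncard_edgeSet_le_card [Finite V] (hv : Set.InjOn v (Set.Iio n))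
    {Q : Finset (ℕ × ℕ)} (hQ : ∀ p ∈ Q, p.1 < p.2 ∧ p.2 < n ∧ G.Adj (v p.1) (v p.2))
    (hcard : G.edgeSet.ncard ≤ Q.card) {a b : ℕ} (hab : a < b) (hb : b < n)
    (hadj : G.Adj (v a) (v b)) : (a, b) ∈ Q := by
  by_contra hnot
  have := card_le_ncard_edgeSet hv (insert (a, b) Q) <| by
    simpa only [Finset.forall_mem_insert] using ⟨⟨hab, hb, hadj⟩, hQ⟩
  rw [Finset.card_insert_of_notMem hnot] at this
  omega

theorem isResolvingSet_pathEdges (hG : G.Preconnected)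
    (hv : Set.BijOn v (Set.Iio n) Set.univ) (hadj : ∀ i, i + 1 < n → G.Adj (v i) (v (i + 1)))
    (I : Finset ℕ) (hI : ∀ i ∈ I, i + 1 < n)
    (hsep : ∀ a b c d, a < b → b < n → c < d → d < n →
      G.Adj (v a) (v b) → G.Adj (v c) (v d) → ¬(a = c ∧ b = d) →
      (∀ i ∈ I, ¬(a = i ∧ b = i + 1)) → (∀ i ∈ I, ¬(c = i ∧ d = i + 1)) →
      ∃ i ∈ I, ¬(StepMeets i a b ↔ StepMeets i c d)) :
    IsResolvingSet G.lineGraph (pathEdges G v I) := by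
  refine isResolvingSet_of_forall_exists_not_adj_iff hG.lineGraph fun e f hef he hf => ?_
  obtain ⟨a, b, hab, hb, hea⟩ := exists_lt_lt_eq_sym2_mk hv.surjOn e
  obtain ⟨c, d, hcd, hd, hfc⟩ := exists_lt_lt_eq_sym2_mk hv.surjOn f
  obtain ⟨i, hi, hmeets⟩ := hsep a b c d hab hb hcd hd (G.mem_edgeSet.1 (hea ▸ e.2))
    (G.mem_edgeSet.1 (hfc ▸ f.2))
    (by rintro ⟨rfl, rfl⟩; exact hef (Subtype.ext (hea.trans hfc.symm)))
    (by rintro i hi ⟨rfl, rfl⟩; exact he ⟨a, hi, hea⟩)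
    (by rintro i hi ⟨rfl, rfl⟩; exact hf ⟨c, hi, hfc⟩)
  refine ⟨⟨s(v i, v (i + 1)), hadj i (hI i hi)⟩, ⟨i, hi, rfl⟩, ?_⟩
  rwa [lineGraph_adj_iff_exists, lineGraph_adj_iff_exists, hea, hfc,
    exists_mem_sym2_mk_iff_stepMeets hv.injOn (hab.trans hb) hb (hI i hi),
    exists_mem_sym2_mk_iff_stepMeets hv.injOn (hcd.trans hd) hd (hI i hi),
    and_iff_right (fun h => he ⟨i, hi, congrArg Subtype.val h⟩),
    and_iff_right (fun h => hf ⟨i, hi, congrArg Subtype.val h⟩)]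

theorem isResolvingSet_pathEdges_range (hG : G.Preconnected)
    (hv : Set.BijOn v (Set.Iio n) Set.univ) (hadj : ∀ i, i + 1 < n → G.Adj (v i) (v (i + 1)))
    {m : ℕ} (hnm : n ≤ m + 2) (hm : 3 ≤ m) (hmn : m < n)
    (hexc : m = 3 → ¬(G.Adj (v 0) (v 2) ∧ G.Adj (v 1) (v 3))) :
    IsResolvingSet G.lineGraph (pathEdges G v (Finset.range m)) := by
  refine isResolvingSet_pathEdges hG hv hadj _ (fun i hi => by rw [Finset.mem_range] at hi; omega)
    fun a b c d hab hb hcd hd hAab hAcd hne he hf => ?_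
  simp only [Finset.mem_range] at he hf ⊢
  refine exists_stepMeets_not_iff hnm hm hb hd hab hcd hne
    (fun h => he a h.2 ⟨rfl, h.1⟩) (fun h => hf c h.2 ⟨rfl, h.1⟩) fun h3 => ⟨?_, ?_⟩
  · rintro ⟨rfl, rfl, rfl, rfl⟩
    exact hexc h3 ⟨hAab, hAcd⟩
  · rintro ⟨rfl, rfl, rfl, rfl⟩
    exact hexc h3 ⟨hAcd, hAab⟩

theorem isResolvingSet_pathEdges_of_ncard_edgeSet_le_six [Finite V] (hG : G.Preconnected)
    (hv : Set.BijOn v (Set.Iio n) Set.univ) (hadj : ∀ i, i + 1 < n → G.Adj (v i) (v (i + 1)))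
    (hn : n = 5)
    (h02 : G.Adj (v 0) (v 2)) (h13 : G.Adj (v 1) (v 3)) (h6 : G.edgeSet.ncard ≤ 6) :
    IsResolvingSet G.lineGraph (pathEdges G v {0, 1, 3}) := by
  subst hn
  have hsix : ∀ a b, a < b → b < 5 → G.Adj (v a) (v b) → (a, b) ∈ exceptionalIndexEdges := by
    refine fun a b hab hb => mem_of_ncard_edgeSet_le_card hv.injOn ?_ h6 hab hb
    simp only [exceptionalIndexEdges, Finset.mem_insert, Finset.mem_singleton]
    rintro p (rfl | rfl | rfl | rfl | rfl | rfl)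
    all_goals exact ⟨by omega, by omega, by first | exact hadj _ (by omega) | assumption⟩
  refine isResolvingSet_pathEdges hG hv hadj _ (by simp)
    fun a b c d hab hb hcd hd hAab hAcd hne he hf => ?_
  exact exists_stepMeets_not_iff_of_mem_exceptionalIndexEdges
    _ (hsix a b hab hb hAab) _ (hsix c d hcd hd hAcd)
    (by simpa only [ne_eq, Prod.mk.injEq] using hne)
    (by simpa only [ne_eq, Prod.mk.injEq] using he)
    (by simpa only [ne_eq, Prod.mk.injEq] using hf)

end HamiltonianPath

theorem exists_isResolvingSet_lineGraph [Fintype V] [DecidableEq V] {G : SimpleGraph V}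
    (hn : 5 ≤ Fintype.card V) (hG : G.Connected) (hham : HasHamiltonianPath G)
    (hE : 2 * (Fintype.card V - 2) ≤ G.edgeSet.ncard) :
    ∃ W : Set G.edgeSet, IsResolvingSet G.lineGraph W ∧
      W.ncard + Fintype.card V ≤ G.edgeSet.ncard + 2 := by
  obtain ⟨v, hv, hadj⟩ := hham.exists_bijOn
  have hcard (I : Finset ℕ) := ncard_pathEdges_le (G := G) (v := v) I
  by_cases hspecial : Fintype.card V = 5 ∧ G.Adj (v 0) (v 2) ∧ G.Adj (v 1) (v 3)
  · obtain ⟨hn5, h02, h13⟩ := hspecial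
    rcases (show 7 ≤ G.edgeSet.ncard ∨ G.edgeSet.ncard = 6 by omega) with h7 | h6
    · refine ⟨_, isResolvingSet_pathEdges_range hG.preconnected hv hadj (m := 4)
        (by omega) (by norm_num) (by omega) (by norm_num), ?_⟩
      have := hcard (Finset.range 4)
      rw [Finset.card_range] at this
      omega
    · refine ⟨_, isResolvingSet_pathEdges_of_ncard_edgeSet_le_six hG.preconnected hv hadj hn5
        h02 h13 h6.le, ?_⟩
      have := hcard {0, 1, 3}
      rw [show ({0, 1, 3} : Finset ℕ).card = 3 from rfl] at this
      omega
  · refine ⟨_, isResolvingSet_pathEdges_range hG.preconnected hv hadj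
      (m := Fintype.card V - 2) (by omega) (by omega) (by omega)
      fun h3 h => hspecial ⟨by omega, h⟩, ?_⟩
    have := hcard (Finset.range (Fintype.card V - 2))
    rw [Finset.card_range] at this
    omega

/-- If `G` is connected of order `n ≥ 5`, contains a Hamiltonian path, and has
`|E(G)| ≥ 2(n-2)` edges, then `dim(L(G)) ≤ Z(L(G))`. -/
theorem metricDim_lineGraph_le_zeroForcingNum_lineGraph_of_hamiltonianPath {V : Type*}
    [Fintype V] [DecidableEq V] (G : SimpleGraph V)
    (hn : 5 ≤ Fintype.card V) (hconn : G.Connected) (hham : HasHamiltonianPath G)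
    (hE : 2 * (Fintype.card V - 2) ≤ G.edgeSet.ncard) :
    metricDim G.lineGraph ≤ zeroForcingNum G.lineGraph := by
  obtain ⟨W, hW, hWcard⟩ := exists_isResolvingSet_lineGraph hn hconn hham hE
  obtain ⟨S, hScard, hS⟩ : zeroForcingNum G.lineGraph ∈
      {k | ∃ S : Set G.edgeSet, S.ncard = k ∧ IsZeroForcingSet G.lineGraph S} :=
    Nat.sInf_mem ⟨_, Set.univ, rfl, 0, rfl⟩
  have hZ := hS.ncard_edgeSet_le
  calc metricDim G.lineGraph ≤ W.ncard := Nat.sInf_le ⟨W, rfl, hW⟩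
    _ ≤ zeroForcingNum G.lineGraph := by omega
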